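/- Let f : ℝ → ℝ be nonnegative and measurable, and suppose β ↦ β^k f(β) exp(-β E') is integrable on [0,∞) for k = 0, 1, 2 and all E' in a neighborhood of E, with ρ(E) > 0 and β_F(E) ≠ 0. Then the conditional second moment of the reduced inverse temperature z = β/β_F(E) satisfies ∫₀^∞ (β/β_F(E))² · (f(β) exp(-β E)/ρ(E)) dβ = 1 - β_F'(E)/β_F(E)², and in particular this quantity is at least 1; hence the generalized entropic index Q = ⟨(β/β_F)²⟩ satisfies Q ≥ 1 for any superstatistical model. -/

import Mathlib

/-!
With `M k E = ∫₀^∞ β^k f(β) e^{-βE} dβ`, differentiation under the integral sign gives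
`(M k)' = -M (k+1)`. Hence `ρ = M 0`, `β_F = M 1 / M 0` and `β_F' = (M 1² - M 0 M 2) / M 0²`,
while the conditional second moment of `β / β_F` is `M 0 M 2 / M 1²`, which equals
`1 - β_F' / β_F²`. It is at least `1` because `M 1² ≤ M 0 M 2`: the variance of `β` under
`P(β|E)` is nonnegative.
-/

open MeasureTheory Real

/-- The superstatistical ensemble function: the Laplace transform of the
weight function `f` over `[0, ∞)`. -/
noncomputable def rho (f : ℝ → ℝ) (E : ℝ) : ℝ :=
  ∫ β in Set.Ici (0 : ℝ), f β * Real.exp (-β * E)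

/-- The fundamental inverse temperature `β_F(E) = -(d/dE) log ρ(E)`. -/
noncomputable def betaF (f : ℝ → ℝ) (E : ℝ) : ℝ :=
  -deriv (fun E' => Real.log (rho f E')) E

open Filter Topology Set

noncomputable def laplaceMoment (f : ℝ → ℝ) (k : ℕ) (x : ℝ) : ℝ :=
  ∫ β in Ici (0 : ℝ), β ^ k * f β * exp (-β * x)

theorem rho_eq_laplaceMoment_zero (f : ℝ → ℝ) : rho f = laplaceMoment f 0 := by
  funext x
  simp only [rho, laplaceMoment, pow_zero, one_mul]

theorem hasDerivAt_laplaceMoment {f : ℝ → ℝ} {k : ℕ} {x₀ : ℝ}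
    (hk : ∀ᶠ x in 𝓝 x₀, IntegrableOn (fun β => β ^ k * f β * exp (-β * x)) (Ici 0))
    (hk1 : ∀ᶠ x in 𝓝 x₀,
      IntegrableOn (fun β => β ^ (k + 1) * f β * exp (-β * x)) (Ici 0)) :
    HasDerivAt (laplaceMoment f k) (-laplaceMoment f (k + 1) x₀) x₀ := by
  obtain ⟨ε, hε, hk1_ball⟩ := Metric.eventually_nhds_iff_ball.mp hk1
  set a := x₀ - ε / 2 with ha_def
  have ha : a ∈ Metric.ball x₀ ε := by
    rw [Metric.mem_ball, dist_eq, abs_of_neg (by linarith)]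
    linarith
  -- `a` lies left of `ball x₀ (ε / 2)`: the `(k+1)`-st moment at `a` dominates the derivative there
  have h_bound : ∀ᵐ β ∂volume.restrict (Ici (0 : ℝ)), ∀ x ∈ Metric.ball x₀ (ε / 2),
      ‖-(β ^ (k + 1) * f β * exp (-β * x))‖ ≤ ‖β ^ (k + 1) * f β * exp (-β * a)‖ := by
    filter_upwards [ae_restrict_mem measurableSet_Ici] with β (hβ : 0 ≤ β) x hx
    have hax : a ≤ x := by
      rw [Metric.mem_ball, dist_eq] at hx
      linarith [neg_abs_le (x - x₀)]
    rw [norm_neg, norm_mul, norm_mul (β ^ (k + 1) * f β), norm_of_nonneg (exp_pos _).le,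
      norm_of_nonneg (exp_pos _).le]
    exact mul_le_mul_of_nonneg_left (exp_le_exp.mpr (by nlinarith)) (norm_nonneg _)
  have h_diff : ∀ β x : ℝ, HasDerivAt (fun x => β ^ k * f β * exp (-β * x))
      (-(β ^ (k + 1) * f β * exp (-β * x))) x := by
    intro β x
    exact ((((hasDerivAt_id' x).const_mul (-β)).exp).const_mul (β ^ k * f β)).congr_deriv
      (by ring)
  have hparametric := hasDerivAt_integral_of_dominated_loc_of_deriv_le
    (μ := volume.restrict (Ici 0)) (F := fun x β => β ^ k * f β * exp (-β * x))
    (Metric.ball_mem_nhds x₀ (half_pos hε)) (hk.mono fun _ hx => hx.aestronglyMeasurable)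
    hk.self_of_nhds hk1.self_of_nhds.aestronglyMeasurable.neg h_bound (hk1_ball a ha).norm
    (ae_of_all _ fun β x _ => h_diff β x)
  exact hparametric.2.congr_deriv (integral_neg _)

theorem sq_integral_mul_le_integral_mul_integral_sq_mul {μ : Measure ℝ} {w : ℝ → ℝ}
    (hw : 0 ≤ᵐ[μ] w) (h0 : Integrable w μ) (h1 : Integrable (fun x => x * w x) μ)
    (h2 : Integrable (fun x => x ^ 2 * w x) μ) :
    (∫ x, x * w x ∂μ) ^ 2 ≤ (∫ x, w x ∂μ) * ∫ x, x ^ 2 * w x ∂μ := by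
  have hquadratic : ∀ t : ℝ,
      0 ≤ (∫ x, w x ∂μ) * (t * t) + (-2 * ∫ x, x * w x ∂μ) * t + ∫ x, x ^ 2 * w x ∂μ := by
    intro t
    have hexpand : ∫ x, (x - t) ^ 2 * w x ∂μ
        = ∫ x, (x ^ 2 * w x + (-2 * t) * (x * w x) + (t * t) * w x) ∂μ := by
      congr with x
      ring
    have h21 : Integrable (fun x => x ^ 2 * w x + (-2 * t) * (x * w x)) μ :=
      h2.add (h1.const_mul _)
    rw [integral_add h21 (h0.const_mul _), integral_add h2 (h1.const_mul _),
      integral_const_mul, integral_const_mul] at hexpand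
    have hnonneg : 0 ≤ ∫ x, (x - t) ^ 2 * w x ∂μ :=
      integral_nonneg_of_ae (hw.mono fun x hx => mul_nonneg (sq_nonneg _) hx)
    linarith
  have hdiscrim := discrim_le_zero hquadratic
  rw [discrim] at hdiscrim
  linarith

section

variable {f : ℝ → ℝ} {E : ℝ}

theorem betaF_eventuallyEq
    (hint : ∀ᶠ x in 𝓝 E, ∀ k ≤ 1, IntegrableOn (fun β => β ^ k * f β * exp (-β * x)) (Ici 0))
    (hρ : rho f E ≠ 0) :
    betaF f =ᶠ[𝓝 E] fun x => laplaceMoment f 1 x / laplaceMoment f 0 x := by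
  have hρ_deriv : ∀ᶠ x in 𝓝 E, HasDerivAt (rho f) (-laplaceMoment f 1 x) x := by
    filter_upwards [hint.eventually_nhds] with x hx
    rw [rho_eq_laplaceMoment_zero]
    exact hasDerivAt_laplaceMoment (hx.mono fun _ h => h 0 (by norm_num))
      (hx.mono fun _ h => h 1 (by norm_num))
  have hρ_ne : ∀ᶠ x in 𝓝 E, rho f x ≠ 0 :=
    hρ_deriv.self_of_nhds.continuousAt.eventually_ne hρ
  filter_upwards [hρ_deriv, hρ_ne] with x hx hx_ne
  rw [betaF, (hx.log hx_ne).deriv, rho_eq_laplaceMoment_zero, neg_div, neg_neg]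

theorem hasDerivAt_betaF
    (hint : ∀ᶠ x in 𝓝 E, ∀ k ≤ 2, IntegrableOn (fun β => β ^ k * f β * exp (-β * x)) (Ici 0))
    (hρ : rho f E ≠ 0) :
    HasDerivAt (betaF f)
      ((laplaceMoment f 1 E ^ 2 - laplaceMoment f 0 E * laplaceMoment f 2 E)
        / laplaceMoment f 0 E ^ 2) E := by
  have hmoment : ∀ k ≤ 1, HasDerivAt (laplaceMoment f k) (-laplaceMoment f (k + 1) E) E :=
    fun k hk => hasDerivAt_laplaceMoment (hint.mono fun _ h => h k (by omega))
      (hint.mono fun _ h => h (k + 1) (by omega))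
  have hM0 : laplaceMoment f 0 E ≠ 0 := rho_eq_laplaceMoment_zero f ▸ hρ
  have hβF := betaF_eventuallyEq (hint.mono fun _ h k hk => h k (by omega)) hρ
  exact (((hmoment 1 le_rfl).div (hmoment 0 zero_le_one) hM0).congr_of_eventuallyEq
    hβF).congr_deriv (by ring)

end

theorem laplaceMoment_one_sq_le {f : ℝ → ℝ} {x : ℝ} (hf : ∀ β, 0 ≤ f β)
    (hint : ∀ k ≤ 2, IntegrableOn (fun β => β ^ k * f β * exp (-β * x)) (Ici 0)) :
    laplaceMoment f 1 x ^ 2 ≤ laplaceMoment f 0 x * laplaceMoment f 2 x := by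
  have hint' : ∀ k ≤ 2, IntegrableOn (fun β => β ^ k * (f β * exp (-β * x))) (Ici 0) :=
    fun k hk => by simpa only [mul_assoc] using hint k hk
  have h := sq_integral_mul_le_integral_mul_integral_sq_mul
    (ae_of_all _ fun β => mul_nonneg (hf β) (exp_pos (-β * x)).le)
    (by simpa only [IntegrableOn, pow_zero, one_mul] using hint' 0 (by norm_num))
    (by simpa only [IntegrableOn, pow_one] using hint' 1 (by norm_num)) (hint' 2 le_rfl)
  simpa only [laplaceMoment, pow_zero, pow_one, one_mul, mul_assoc] using h

theorem setIntegral_sq_div_mul_div_eq (f : ℝ → ℝ) (E c r : ℝ) :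
    ∫ β in Ici (0 : ℝ), (β / c) ^ 2 * (f β * exp (-β * E) / r)
      = laplaceMoment f 2 E / (c ^ 2 * r) := by
  simp only [div_pow, div_mul_div_comm, ← mul_assoc, integral_div, laplaceMoment]

theorem conditional_second_moment_reduced_inverse_temperature_general
    (f : ℝ → ℝ) (hf_nonneg : ∀ β, 0 ≤ f β) (E : ℝ)
    (hint : ∃ U ∈ nhds E, ∀ E' ∈ U, ∀ k ≤ 2,
      IntegrableOn (fun β => β ^ k * f β * Real.exp (-β * E')) (Set.Ici (0 : ℝ)))
    (hpos : 0 < rho f E) (hbF : betaF f E ≠ 0) :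
    (∫ β in Set.Ici (0 : ℝ),
        (β / betaF f E) ^ 2 * (f β * Real.exp (-β * E) / rho f E)
      = 1 - deriv (betaF f) E / (betaF f E) ^ 2) ∧
    1 ≤ ∫ β in Set.Ici (0 : ℝ),
        (β / betaF f E) ^ 2 * (f β * Real.exp (-β * E) / rho f E) := by
  have hint_nhds := eventually_iff_exists_mem.mpr hint
  have hbE : betaF f E = laplaceMoment f 1 E / laplaceMoment f 0 E :=
    (betaF_eventuallyEq (hint_nhds.mono fun _ h k hk => h k (by omega)) hpos.ne').self_of_nhds
  have hM1 : laplaceMoment f 1 E ≠ 0 := fun h => hbF (by rw [hbE, h, zero_div])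
  have hvar := laplaceMoment_one_sq_le hf_nonneg hint_nhds.self_of_nhds
  rw [setIntegral_sq_div_mul_div_eq, (hasDerivAt_betaF hint_nhds hpos.ne').deriv, hbE]
  rw [rho_eq_laplaceMoment_zero] at hpos ⊢
  set M := laplaceMoment f
  have hQ : M 2 E / ((M 1 E / M 0 E) ^ 2 * M 0 E) = M 0 E * M 2 E / M 1 E ^ 2 := by
    field_simp
  rw [hQ]
  exact ⟨by field_simp; ring, (one_le_div (by positivity)).mpr hvar⟩

/-- The conditional second moment of the reduced inverse temperature
`z = β/β_F(E)` equals `1 - β_F'(E)/β_F(E)²`, and in particular it is at least 1; hence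
the generalized entropic index `Q = ⟨(β/β_F)²⟩` satisfies `Q ≥ 1` for any
superstatistical model. -/
theorem conditional_second_moment_reduced_inverse_temperature
    (f : ℝ → ℝ) (hf_meas : Measurable f) (hf_nonneg : ∀ β, 0 ≤ f β) (E : ℝ)
    (hint : ∃ U ∈ nhds E, ∀ E' ∈ U, ∀ k ≤ 2,
      IntegrableOn (fun β => β ^ k * f β * Real.exp (-β * E')) (Set.Ici (0 : ℝ)))
    (hpos : 0 < rho f E) (hbF : betaF f E ≠ 0) :
    (∫ β in Set.Ici (0 : ℝ),
        (β / betaF f E) ^ 2 * (f β * Real.exp (-β * E) / rho f E)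
      = 1 - deriv (betaF f) E / (betaF f E) ^ 2) ∧
    1 ≤ ∫ β in Set.Ici (0 : ℝ),
        (β / betaF f E) ^ 2 * (f β * Real.exp (-β * E) / rho f E) :=
  conditional_second_moment_reduced_inverse_temperature_general f hf_nonneg E hint hpos hbF
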